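/- The operators X_s, D_s and E+n satisfy the sl(2) commutation relations: for every smooth function f one has (E+n)(D_s f) − D_s((E+n)f) = −D_s f, (E+n)(X_s f) − X_s((E+n)f) = X_s f, and X_s(D_s f) − D_s(X_s f) = i(E+n)f. -/

import Mathlib

noncomputable section

open Complex Finset

/-- The configuration space `ℝ^{2n} × ℝ^n`, with points `(x, y, q)` where
`x y : Fin n → ℝ` are the base variables and `q : Fin n → ℝ` the fiber variables. -/
abbrev Pt (n : ℕ) := (Fin n → ℝ) × (Fin n → ℝ) × (Fin n → ℝ)

/-- Partial derivative with respect to `x_j`. -/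
def pdx (n : ℕ) (j : Fin n) (f : Pt n → ℂ) : Pt n → ℂ := fun p =>
  deriv (fun t => f (Function.update p.1 j t, p.2.1, p.2.2)) (p.1 j)

/-- Partial derivative with respect to `y_j`. -/
def pdy (n : ℕ) (j : Fin n) (f : Pt n → ℂ) : Pt n → ℂ := fun p =>
  deriv (fun t => f (p.1, Function.update p.2.1 j t, p.2.2)) (p.2.1 j)

/-- Partial derivative with respect to `q_j`. -/
def pdq (n : ℕ) (j : Fin n) (f : Pt n → ℂ) : Pt n → ℂ := fun p =>
  deriv (fun t => f (p.1, p.2.1, Function.update p.2.2 j t)) (p.2.2 j)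

/-- The symplectic Dirac operator `D_s f = Σ_j (i q_j ∂_{y_j} f − ∂_{x_j} ∂_{q_j} f)`. -/
def Ds (n : ℕ) (f : Pt n → ℂ) : Pt n → ℂ := fun p =>
  ∑ j : Fin n, (Complex.I * (p.2.2 j : ℂ) * pdy n j f p - pdx n j (pdq n j f) p)

/-- The operator `X_s f = Σ_j (y_j ∂_{q_j} f + i x_j q_j f)`. -/
def Xs (n : ℕ) (f : Pt n → ℂ) : Pt n → ℂ := fun p =>
  ∑ j : Fin n, ((p.2.1 j : ℂ) * pdq n j f p + Complex.I * (p.1 j : ℂ) * (p.2.2 j : ℂ) * f p)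

/-- The Euler operator `E f = Σ_j (x_j ∂_{x_j} f + y_j ∂_{y_j} f)`. -/
def Eul (n : ℕ) (f : Pt n → ℂ) : Pt n → ℂ := fun p =>
  ∑ j : Fin n, ((p.1 j : ℂ) * pdx n j f p + (p.2.1 j : ℂ) * pdy n j f p)

/-- The operator `E + n`. -/
def EN (n : ℕ) (f : Pt n → ℂ) : Pt n → ℂ := fun p => Eul n f p + (n : ℂ) * f p

variable {n : ℕ}


def Dv (v : Pt n) (f : Pt n → ℂ) : Pt n → ℂ := fun p => fderiv ℝ f p v

def ex (j : Fin n) : Pt n := (Pi.single j 1, 0, 0)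
def ey (j : Fin n) : Pt n := (0, Pi.single j 1, 0)
def eqv (j : Fin n) : Pt n := (0, 0, Pi.single j 1)

abbrev Sm (f : Pt n → ℂ) : Prop := ContDiff ℝ (⊤ : ℕ∞) f

theorem Dv_smooth {f : Pt n → ℂ} (hf : Sm f) (v : Pt n) : Sm (Dv v f) :=
  (hf.fderiv_right (by simp)).clm_apply contDiff_const

theorem deriv_along_line {f : Pt n → ℂ} {p : Pt n} (hf : DifferentiableAt ℝ f p)
    (v : Pt n) (c : ℝ) (γ : ℝ → Pt n) (hγ : ∀ t, γ t = p + (t - c) • v) :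
    deriv (fun t => f (γ t)) c = Dv v f p := by
  have hγ' : γ = fun t => p + (t - c) • v := funext hγ
  subst hγ'
  have h1 : HasDerivAt (fun t : ℝ => p + (t - c) • v) v c := by
    have : HasDerivAt (fun t : ℝ => p + (t - c) • v) ((1:ℝ) • v) c :=
      (((hasDerivAt_id c).sub_const c).smul_const v).const_add p
    rwa [one_smul] at this
  have h2 : p + (c - c) • v = p := by simp
  have h4 : HasFDerivAt f (fderiv ℝ f p) (p + (c - c) • v) := h2.symm ▸ hf.hasFDerivAt
  exact (h4.comp_hasDerivAt c h1).deriv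

theorem update_line (g : Fin n → ℝ) (j : Fin n) (t : ℝ) :
    Function.update g j t = g + (t - g j) • (Pi.single j 1 : Fin n → ℝ) := by
  funext k
  by_cases h : k = j
  · subst h; simp
  · simp [Function.update_apply, h, Pi.single_apply, Ne.symm h]

theorem pdx_eq {f : Pt n → ℂ} {p : Pt n} (hf : DifferentiableAt ℝ f p) (j : Fin n) :
    pdx n j f p = Dv (ex j) f p := by
  refine deriv_along_line hf (ex j) (p.1 j) _ fun t => ?_
  show (Function.update p.1 j t, p.2.1, p.2.2) = _
  rw [update_line]
  show _ = (p.1 + _, p.2.1 + _, p.2.2 + _)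
  simp [ex]

theorem pdy_eq {f : Pt n → ℂ} {p : Pt n} (hf : DifferentiableAt ℝ f p) (j : Fin n) :
    pdy n j f p = Dv (ey j) f p := by
  refine deriv_along_line hf (ey j) (p.2.1 j) _ fun t => ?_
  show (p.1, Function.update p.2.1 j t, p.2.2) = _
  rw [update_line]
  show _ = (p.1 + _, p.2.1 + _, p.2.2 + _)
  simp [ey]

theorem pdq_eq {f : Pt n → ℂ} {p : Pt n} (hf : DifferentiableAt ℝ f p) (j : Fin n) :
    pdq n j f p = Dv (eqv j) f p := by
  refine deriv_along_line hf (eqv j) (p.2.2 j) _ fun t => ?_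
  show (p.1, p.2.1, Function.update p.2.2 j t) = _
  rw [update_line]
  show _ = (p.1 + _, p.2.1 + _, p.2.2 + _)
  simp [eqv]

/-- smoothness implies differentiability at a point -/
theorem Sm.dAt {f : Pt n → ℂ} (hf : Sm f) (p : Pt n) : DifferentiableAt ℝ f p :=
  hf.differentiable (by simp) p

theorem Dv_swap {f : Pt n → ℂ} (hf : Sm f) (v w : Pt n) (p : Pt n) :
    Dv v (Dv w f) p = Dv w (Dv v f) p := by
  have hsym : IsSymmSndFDerivAt ℝ f p := hf.contDiffAt.isSymmSndFDerivAt (by simp only [minSmoothness_of_isRCLikeNormedField]; exact WithTop.coe_le_coe.mpr le_top)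
  have hd' : ContDiff ℝ (⊤:ℕ∞) (fderiv ℝ f) := hf.fderiv_right (by simp)
  have hd : DifferentiableAt ℝ (fderiv ℝ f) p := hd'.differentiable (by simp) p
  have key : ∀ u z : Pt n, Dv u (Dv z f) p = fderiv ℝ (fderiv ℝ f) p u z := by
    intro u z
    show fderiv ℝ (fun p => (fderiv ℝ f p) z) p u = _
    rw [fderiv_clm_apply hd (differentiableAt_const z)]
    simp
  rw [key, key, hsym v w]

theorem Dv_sum {ι : Type*} (s : Finset ι) (g : ι → Pt n → ℂ)
    (hg : ∀ i ∈ s, Sm (g i)) (v : Pt n) (p : Pt n) :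
    Dv v (fun p => ∑ i ∈ s, g i p) p = ∑ i ∈ s, Dv v (g i) p := by
  show fderiv ℝ _ p v = _
  rw [fderiv_fun_sum (fun i hi => (hg i hi).dAt p)]
  simp [Dv]

theorem Dv_const_mul {g : Pt n → ℂ} (hg : Sm g) (c : ℂ) (v p : Pt n) :
    Dv v (fun p => c * g p) p = c * Dv v g p := by
  show fderiv ℝ _ p v = _
  rw [fderiv_const_mul (hg.dAt p)]
  simp [Dv]

theorem Dv_mul {g h : Pt n → ℂ} (hg : Sm g) (hh : Sm h) (v p : Pt n) :
    Dv v (fun p => g p * h p) p = Dv v g p * h p + g p * Dv v h p := by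
  show fderiv ℝ _ p v = _
  rw [fderiv_fun_mul (hg.dAt p) (hh.dAt p)]
  simp [Dv, smul_eq_mul]
  ring

theorem Dv_sub {g h : Pt n → ℂ} (hg : Sm g) (hh : Sm h) (v p : Pt n) :
    Dv v (fun p => g p - h p) p = Dv v g p - Dv v h p := by
  show fderiv ℝ _ p v = _
  rw [fderiv_fun_sub (hg.dAt p) (hh.dAt p)]
  simp [Dv]

theorem Dv_add {g h : Pt n → ℂ} (hg : Sm g) (hh : Sm h) (v p : Pt n) :
    Dv v (fun p => g p + h p) p = Dv v g p + Dv v h p := by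
  show fderiv ℝ _ p v = _
  rw [fderiv_fun_add (hg.dAt p) (hh.dAt p)]
  simp [Dv]

def LX (k : Fin n) : Pt n →L[ℝ] ℂ :=
  Complex.ofRealCLM.comp ((ContinuousLinearMap.proj k).comp
    (ContinuousLinearMap.fst ℝ (Fin n → ℝ) ((Fin n → ℝ) × (Fin n → ℝ))))
def LY (k : Fin n) : Pt n →L[ℝ] ℂ :=
  Complex.ofRealCLM.comp ((ContinuousLinearMap.proj k).comp
    ((ContinuousLinearMap.fst ℝ (Fin n → ℝ) (Fin n → ℝ)).comp
      (ContinuousLinearMap.snd ℝ (Fin n → ℝ) ((Fin n → ℝ) × (Fin n → ℝ)))))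
def LQ (k : Fin n) : Pt n →L[ℝ] ℂ :=
  Complex.ofRealCLM.comp ((ContinuousLinearMap.proj k).comp
    ((ContinuousLinearMap.snd ℝ (Fin n → ℝ) (Fin n → ℝ)).comp
      (ContinuousLinearMap.snd ℝ (Fin n → ℝ) ((Fin n → ℝ) × (Fin n → ℝ)))))

theorem LX_eq (k : Fin n) : (fun p : Pt n => ((p.1 k : ℝ) : ℂ)) = ⇑(LX k) := rfl
theorem LY_eq (k : Fin n) : (fun p : Pt n => ((p.2.1 k : ℝ) : ℂ)) = ⇑(LY k) := rfl
theorem LQ_eq (k : Fin n) : (fun p : Pt n => ((p.2.2 k : ℝ) : ℂ)) = ⇑(LQ k) := rfl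

theorem Sm_cx (k : Fin n) : Sm (fun p : Pt n => ((p.1 k : ℝ) : ℂ)) := by
  rw [LX_eq]; exact (LX k).contDiff
theorem Sm_cy (k : Fin n) : Sm (fun p : Pt n => ((p.2.1 k : ℝ) : ℂ)) := by
  rw [LY_eq]; exact (LY k).contDiff
theorem Sm_cq (k : Fin n) : Sm (fun p : Pt n => ((p.2.2 k : ℝ) : ℂ)) := by
  rw [LQ_eq]; exact (LQ k).contDiff

theorem Dv_cx (k : Fin n) (v p : Pt n) :
    Dv v (fun p : Pt n => ((p.1 k : ℝ) : ℂ)) p = ((v.1 k : ℝ) : ℂ) := by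
  show fderiv ℝ _ p v = _
  rw [LX_eq, ContinuousLinearMap.fderiv]; rfl
theorem Dv_cy (k : Fin n) (v p : Pt n) :
    Dv v (fun p : Pt n => ((p.2.1 k : ℝ) : ℂ)) p = ((v.2.1 k : ℝ) : ℂ) := by
  show fderiv ℝ _ p v = _
  rw [LY_eq, ContinuousLinearMap.fderiv]; rfl
theorem Dv_cq (k : Fin n) (v p : Pt n) :
    Dv v (fun p : Pt n => ((p.2.2 k : ℝ) : ℂ)) p = ((v.2.2 k : ℝ) : ℂ) := by
  show fderiv ℝ _ p v = _
  rw [LQ_eq, ContinuousLinearMap.fderiv]; rfl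



open Complex Finset

theorem Ds_eq {f : Pt n → ℂ} (hf : Sm f) : Ds n f =
    fun p => ∑ j : Fin n, (Complex.I * ((p.2.2 j : ℝ) : ℂ) * Dv (ey j) f p
      - Dv (ex j) (Dv (eqv j) f) p) := by
  funext p
  refine Finset.sum_congr rfl fun j _ => ?_
  have h1 : pdq n j f = Dv (eqv j) f := funext fun p => pdq_eq (hf.dAt p) j
  rw [pdy_eq (hf.dAt p) j, h1, pdx_eq ((Dv_smooth hf (eqv j)).dAt p) j]

theorem Xs_eq {f : Pt n → ℂ} (hf : Sm f) : Xs n f =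
    fun p => ∑ j : Fin n, (((p.2.1 j : ℝ) : ℂ) * Dv (eqv j) f p
      + Complex.I * ((p.1 j : ℝ) : ℂ) * ((p.2.2 j : ℝ) : ℂ) * f p) := by
  funext p
  refine Finset.sum_congr rfl fun j _ => ?_
  rw [pdq_eq (hf.dAt p) j]

theorem EN_eq {f : Pt n → ℂ} (hf : Sm f) : EN n f =
    fun p => (∑ j : Fin n, (((p.1 j : ℝ) : ℂ) * Dv (ex j) f p
      + ((p.2.1 j : ℝ) : ℂ) * Dv (ey j) f p)) + (n : ℂ) * f p := by
  funext p
  show Eul n f p + _ = _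
  congr 1
  refine Finset.sum_congr rfl fun j _ => ?_
  rw [pdx_eq (hf.dAt p) j, pdy_eq (hf.dAt p) j]

theorem Sm_Ds {f : Pt n → ℂ} (hf : Sm f) : Sm (Ds n f) := by
  rw [Ds_eq hf]
  exact ContDiff.sum fun j _ =>
    ((contDiff_const.mul (Sm_cq j)).mul (Dv_smooth hf (ey j))).sub
      (Dv_smooth (Dv_smooth hf (eqv j)) (ex j))

theorem Sm_Xs {f : Pt n → ℂ} (hf : Sm f) : Sm (Xs n f) := by
  rw [Xs_eq hf]
  exact ContDiff.sum fun j _ =>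
    ((Sm_cy j).mul (Dv_smooth hf (eqv j))).add
      (((contDiff_const.mul (Sm_cx j)).mul (Sm_cq j)).mul hf)

theorem Sm_EN {f : Pt n → ℂ} (hf : Sm f) : Sm (EN n f) := by
  rw [EN_eq hf]
  exact (ContDiff.sum fun j _ =>
    ((Sm_cx j).mul (Dv_smooth hf (ex j))).add ((Sm_cy j).mul (Dv_smooth hf (ey j)))).add
    (contDiff_const.mul hf)

theorem Dv_Ds {f : Pt n → ℂ} (hf : Sm f) (v p : Pt n) :
    Dv v (Ds n f) p = ∑ k : Fin n,
      (Complex.I * ((v.2.2 k : ℝ) : ℂ) * Dv (ey k) f p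
       + Complex.I * ((p.2.2 k : ℝ) : ℂ) * Dv v (Dv (ey k) f) p
       - Dv v (Dv (ex k) (Dv (eqv k) f)) p) := by
  have hg : ∀ k : Fin n, Sm (fun p : Pt n => Complex.I * ((p.2.2 k : ℝ) : ℂ) * Dv (ey k) f p) :=
    fun k => (contDiff_const.mul (Sm_cq k)).mul (Dv_smooth hf (ey k))
  have hh : ∀ k : Fin n, Sm (Dv (ex k) (Dv (eqv k) f)) :=
    fun k => Dv_smooth (Dv_smooth hf (eqv k)) (ex k)
  rw [Ds_eq hf, Dv_sum univ _ (fun k _ => (hg k).sub (hh k)) v p]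
  refine Finset.sum_congr rfl fun k _ => ?_
  rw [Dv_sub (hg k) (hh k) v p,
    Dv_mul (contDiff_const.mul (Sm_cq k)) (Dv_smooth hf (ey k)) v p,
    Dv_const_mul (Sm_cq k) Complex.I v p, Dv_cq k v p]

theorem Dv_Xs {f : Pt n → ℂ} (hf : Sm f) (v p : Pt n) :
    Dv v (Xs n f) p = ∑ k : Fin n,
      (((v.2.1 k : ℝ) : ℂ) * Dv (eqv k) f p
       + ((p.2.1 k : ℝ) : ℂ) * Dv v (Dv (eqv k) f) p
       + Complex.I * (((v.1 k : ℝ) : ℂ) * ((p.2.2 k : ℝ) : ℂ)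
           + ((p.1 k : ℝ) : ℂ) * ((v.2.2 k : ℝ) : ℂ)) * f p
       + Complex.I * ((p.1 k : ℝ) : ℂ) * ((p.2.2 k : ℝ) : ℂ) * Dv v f p) := by
  have hg : ∀ k : Fin n, Sm (fun p : Pt n => ((p.2.1 k : ℝ) : ℂ) * Dv (eqv k) f p) :=
    fun k => (Sm_cy k).mul (Dv_smooth hf (eqv k))
  have hh : ∀ k : Fin n,
      Sm (fun p : Pt n => Complex.I * ((p.1 k : ℝ) : ℂ) * ((p.2.2 k : ℝ) : ℂ) * f p) :=
    fun k => ((contDiff_const.mul (Sm_cx k)).mul (Sm_cq k)).mul hf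
  rw [Xs_eq hf, Dv_sum univ _ (fun k _ => (hg k).add (hh k)) v p]
  refine Finset.sum_congr rfl fun k _ => ?_
  rw [Dv_add (hg k) (hh k) v p,
    Dv_mul (Sm_cy k) (Dv_smooth hf (eqv k)) v p, Dv_cy k v p,
    Dv_mul ((contDiff_const.mul (Sm_cx k)).mul (Sm_cq k)) hf v p,
    Dv_mul (contDiff_const.mul (Sm_cx k)) (Sm_cq k) v p,
    Dv_const_mul (Sm_cx k) Complex.I v p, Dv_cx k v p, Dv_cq k v p]
  ring

theorem Dv_EN {f : Pt n → ℂ} (hf : Sm f) (v p : Pt n) :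
    Dv v (EN n f) p = (∑ k : Fin n,
      (((v.1 k : ℝ) : ℂ) * Dv (ex k) f p + ((p.1 k : ℝ) : ℂ) * Dv v (Dv (ex k) f) p
       + ((v.2.1 k : ℝ) : ℂ) * Dv (ey k) f p + ((p.2.1 k : ℝ) : ℂ) * Dv v (Dv (ey k) f) p))
      + (n : ℂ) * Dv v f p := by
  have hg : ∀ k : Fin n, Sm (fun p : Pt n => ((p.1 k : ℝ) : ℂ) * Dv (ex k) f p
      + ((p.2.1 k : ℝ) : ℂ) * Dv (ey k) f p) :=
    fun k => ((Sm_cx k).mul (Dv_smooth hf (ex k))).add ((Sm_cy k).mul (Dv_smooth hf (ey k)))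
  have hsum : Sm (fun p : Pt n => ∑ k : Fin n, (((p.1 k : ℝ) : ℂ) * Dv (ex k) f p
      + ((p.2.1 k : ℝ) : ℂ) * Dv (ey k) f p)) := ContDiff.sum fun k _ => hg k
  rw [EN_eq hf, Dv_add hsum (contDiff_const.mul hf) v p,
    Dv_const_mul hf (n : ℂ) v p, Dv_sum univ _ (fun k _ => hg k) v p]
  congr 1
  refine Finset.sum_congr rfl fun k _ => ?_
  rw [Dv_add ((Sm_cx k).mul (Dv_smooth hf (ex k))) ((Sm_cy k).mul (Dv_smooth hf (ey k))) v p,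
    Dv_mul (Sm_cx k) (Dv_smooth hf (ex k)) v p, Dv_cx k v p,
    Dv_mul (Sm_cy k) (Dv_smooth hf (ey k)) v p, Dv_cy k v p]
  ring

@[simp] theorem ex_1 (j : Fin n) : (ex j).1 = Pi.single j 1 := rfl
@[simp] theorem ex_21 (j : Fin n) : (ex j).2.1 = 0 := rfl
@[simp] theorem ex_22 (j : Fin n) : (ex j).2.2 = 0 := rfl
@[simp] theorem ey_1 (j : Fin n) : (ey j).1 = 0 := rfl
@[simp] theorem ey_21 (j : Fin n) : (ey j).2.1 = Pi.single j 1 := rfl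
@[simp] theorem ey_22 (j : Fin n) : (ey j).2.2 = 0 := rfl
@[simp] theorem eqv_1 (j : Fin n) : (eqv j).1 = 0 := rfl
@[simp] theorem eqv_21 (j : Fin n) : (eqv j).2.1 = 0 := rfl
@[simp] theorem eqv_22 (j : Fin n) : (eqv j).2.2 = Pi.single j 1 := rfl

theorem sum_single_mul (j : Fin n) (g : Fin n → ℂ) :
    ∑ k : Fin n, (((Pi.single j (1:ℝ) : Fin n → ℝ) k : ℂ) * g k) = g j := by
  have h : ∀ k : Fin n, ((Pi.single j (1:ℝ) : Fin n → ℝ) k : ℂ) * g k = if k = j then g k else 0 := by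
    intro k; rw [Pi.single_apply]; split_ifs with hh <;> simp
  rw [Finset.sum_congr rfl fun k _ => h k, Finset.sum_ite_eq' Finset.univ j g]
  simp

theorem sum_I_single_mul (j : Fin n) (g : Fin n → ℂ) :
    ∑ k : Fin n, Complex.I * (((Pi.single j (1:ℝ) : Fin n → ℝ) k : ℝ) : ℂ) * g k
      = Complex.I * g j := by
  calc ∑ k : Fin n, Complex.I * (((Pi.single j (1:ℝ) : Fin n → ℝ) k : ℝ) : ℂ) * g k
      = Complex.I * ∑ k : Fin n, ((((Pi.single j (1:ℝ) : Fin n → ℝ)) k : ℂ) * g k) := by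
        rw [Finset.mul_sum]; exact Finset.sum_congr rfl fun k _ => mul_assoc _ _ _
    _ = Complex.I * g j := by rw [sum_single_mul]

theorem Dx_Ds {f : Pt n → ℂ} (hf : Sm f) (j : Fin n) (p : Pt n) :
    Dv (ex j) (Ds n f) p = ∑ k : Fin n,
      (Complex.I * ((p.2.2 k : ℝ) : ℂ) * Dv (ex j) (Dv (ey k) f) p
       - Dv (ex j) (Dv (ex k) (Dv (eqv k) f)) p) := by
  rw [Dv_Ds hf (ex j) p]
  refine Finset.sum_congr rfl fun k _ => ?_
  simp

theorem Dy_Ds {f : Pt n → ℂ} (hf : Sm f) (j : Fin n) (p : Pt n) :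
    Dv (ey j) (Ds n f) p = ∑ k : Fin n,
      (Complex.I * ((p.2.2 k : ℝ) : ℂ) * Dv (ey j) (Dv (ey k) f) p
       - Dv (ey j) (Dv (ex k) (Dv (eqv k) f)) p) := by
  rw [Dv_Ds hf (ey j) p]
  refine Finset.sum_congr rfl fun k _ => ?_
  simp

theorem Dq_Ds {f : Pt n → ℂ} (hf : Sm f) (j : Fin n) (p : Pt n) :
    Dv (eqv j) (Ds n f) p = Complex.I * Dv (ey j) f p + ∑ k : Fin n,
      (Complex.I * ((p.2.2 k : ℝ) : ℂ) * Dv (eqv j) (Dv (ey k) f) p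
       - Dv (eqv j) (Dv (ex k) (Dv (eqv k) f)) p) := by
  rw [Dv_Ds hf (eqv j) p]
  have hsplit : ∀ k : Fin n,
      (Complex.I * (((eqv j : Pt n).2.2 k : ℝ) : ℂ) * Dv (ey k) f p
       + Complex.I * ((p.2.2 k : ℝ) : ℂ) * Dv (eqv j) (Dv (ey k) f) p
       - Dv (eqv j) (Dv (ex k) (Dv (eqv k) f)) p)
      = Complex.I * (((Pi.single j (1:ℝ) : Fin n → ℝ) k : ℝ) : ℂ) * Dv (ey k) f p
        + (Complex.I * ((p.2.2 k : ℝ) : ℂ) * Dv (eqv j) (Dv (ey k) f) p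
           - Dv (eqv j) (Dv (ex k) (Dv (eqv k) f)) p) := by
    intro k; simp only [eqv_22]; ring
  rw [Finset.sum_congr rfl fun k _ => hsplit k, Finset.sum_add_distrib,
    sum_I_single_mul j (fun k => Dv (ey k) f p)]

theorem Dy_EN {f : Pt n → ℂ} (hf : Sm f) (j : Fin n) (p : Pt n) :
    Dv (ey j) (EN n f) p = Dv (ey j) f p + (n : ℂ) * Dv (ey j) f p
      + ∑ k : Fin n, (((p.1 k : ℝ) : ℂ) * Dv (ey j) (Dv (ex k) f) p
          + ((p.2.1 k : ℝ) : ℂ) * Dv (ey j) (Dv (ey k) f) p) := by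
  rw [Dv_EN hf (ey j) p]
  have hsplit : ∀ k : Fin n,
      ((((ey j : Pt n).1 k : ℝ) : ℂ) * Dv (ex k) f p
       + ((p.1 k : ℝ) : ℂ) * Dv (ey j) (Dv (ex k) f) p
       + (((ey j : Pt n).2.1 k : ℝ) : ℂ) * Dv (ey k) f p
       + ((p.2.1 k : ℝ) : ℂ) * Dv (ey j) (Dv (ey k) f) p)
      = (((Pi.single j (1:ℝ) : Fin n → ℝ) k : ℝ) : ℂ) * Dv (ey k) f p
        + (((p.1 k : ℝ) : ℂ) * Dv (ey j) (Dv (ex k) f) p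
           + ((p.2.1 k : ℝ) : ℂ) * Dv (ey j) (Dv (ey k) f) p) := by
    intro k; simp only [ey_1, ey_21, Pi.zero_apply, Complex.ofReal_zero]; ring
  rw [Finset.sum_congr rfl fun k _ => hsplit k, Finset.sum_add_distrib,
    sum_single_mul j (fun k => Dv (ey k) f p)]
  ring

theorem Dq_EN {f : Pt n → ℂ} (hf : Sm f) (j : Fin n) (p : Pt n) :
    Dv (eqv j) (EN n f) p = (n : ℂ) * Dv (eqv j) f p
      + ∑ k : Fin n, (((p.1 k : ℝ) : ℂ) * Dv (eqv j) (Dv (ex k) f) p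
          + ((p.2.1 k : ℝ) : ℂ) * Dv (eqv j) (Dv (ey k) f) p) := by
  rw [Dv_EN hf (eqv j) p]
  have hsplit : ∀ k : Fin n,
      ((((eqv j : Pt n).1 k : ℝ) : ℂ) * Dv (ex k) f p
       + ((p.1 k : ℝ) : ℂ) * Dv (eqv j) (Dv (ex k) f) p
       + (((eqv j : Pt n).2.1 k : ℝ) : ℂ) * Dv (ey k) f p
       + ((p.2.1 k : ℝ) : ℂ) * Dv (eqv j) (Dv (ey k) f) p)
      = ((p.1 k : ℝ) : ℂ) * Dv (eqv j) (Dv (ex k) f) p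
         + ((p.2.1 k : ℝ) : ℂ) * Dv (eqv j) (Dv (ey k) f) p := by
    intro k; simp only [eqv_1, eqv_21, Pi.zero_apply, Complex.ofReal_zero]; ring
  rw [Finset.sum_congr rfl fun k _ => hsplit k]
  ring

theorem DxDq_EN {f : Pt n → ℂ} (hf : Sm f) (j : Fin n) (p : Pt n) :
    Dv (ex j) (Dv (eqv j) (EN n f)) p =
      Dv (ex j) (Dv (eqv j) f) p + (n : ℂ) * Dv (ex j) (Dv (eqv j) f) p
      + ∑ k : Fin n, (((p.1 k : ℝ) : ℂ) * Dv (ex j) (Dv (eqv j) (Dv (ex k) f)) p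
          + ((p.2.1 k : ℝ) : ℂ) * Dv (ex j) (Dv (eqv j) (Dv (ey k) f)) p) := by
  have hfq : Dv (eqv j) (EN n f) = fun p => (n : ℂ) * Dv (eqv j) f p
      + ∑ k : Fin n, (((p.1 k : ℝ) : ℂ) * Dv (eqv j) (Dv (ex k) f) p
          + ((p.2.1 k : ℝ) : ℂ) * Dv (eqv j) (Dv (ey k) f) p) :=
    funext fun p => Dq_EN hf j p
  have hterm : ∀ k : Fin n, Sm (fun p : Pt n => ((p.1 k : ℝ) : ℂ) * Dv (eqv j) (Dv (ex k) f) p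
      + ((p.2.1 k : ℝ) : ℂ) * Dv (eqv j) (Dv (ey k) f) p) := fun k =>
    ((Sm_cx k).mul (Dv_smooth (Dv_smooth hf (ex k)) (eqv j))).add
      ((Sm_cy k).mul (Dv_smooth (Dv_smooth hf (ey k)) (eqv j)))
  rw [hfq, Dv_add (contDiff_const.mul (Dv_smooth hf (eqv j)))
      (ContDiff.sum fun k _ => hterm k) (ex j) p,
    Dv_const_mul (Dv_smooth hf (eqv j)) (n : ℂ) (ex j) p,
    Dv_sum univ _ (fun k _ => hterm k) (ex j) p]
  have hk : ∀ k : Fin n,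
      Dv (ex j) (fun p : Pt n => ((p.1 k : ℝ) : ℂ) * Dv (eqv j) (Dv (ex k) f) p
        + ((p.2.1 k : ℝ) : ℂ) * Dv (eqv j) (Dv (ey k) f) p) p
      = (((Pi.single j (1:ℝ) : Fin n → ℝ) k : ℝ) : ℂ) * Dv (eqv j) (Dv (ex k) f) p
        + (((p.1 k : ℝ) : ℂ) * Dv (ex j) (Dv (eqv j) (Dv (ex k) f)) p
           + ((p.2.1 k : ℝ) : ℂ) * Dv (ex j) (Dv (eqv j) (Dv (ey k) f)) p) := by
    intro k
    rw [Dv_add ((Sm_cx k).mul (Dv_smooth (Dv_smooth hf (ex k)) (eqv j)))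
        ((Sm_cy k).mul (Dv_smooth (Dv_smooth hf (ey k)) (eqv j))) (ex j) p,
      Dv_mul (Sm_cx k) (Dv_smooth (Dv_smooth hf (ex k)) (eqv j)) (ex j) p,
      Dv_mul (Sm_cy k) (Dv_smooth (Dv_smooth hf (ey k)) (eqv j)) (ex j) p,
      Dv_cx k (ex j) p, Dv_cy k (ex j) p]
    simp only [ex_1, ex_21, Pi.zero_apply, Complex.ofReal_zero]
    ring
  rw [Finset.sum_congr rfl fun k _ => hk k, Finset.sum_add_distrib,
    sum_single_mul j (fun k => Dv (eqv j) (Dv (ex k) f) p),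
    Dv_swap hf (eqv j) (ex j) p]
  ring

theorem Dx_Xs {f : Pt n → ℂ} (hf : Sm f) (j : Fin n) (p : Pt n) :
    Dv (ex j) (Xs n f) p = Complex.I * ((p.2.2 j : ℝ) : ℂ) * f p
      + ∑ k : Fin n, (((p.2.1 k : ℝ) : ℂ) * Dv (ex j) (Dv (eqv k) f) p
          + Complex.I * ((p.1 k : ℝ) : ℂ) * ((p.2.2 k : ℝ) : ℂ) * Dv (ex j) f p) := by
  rw [Dv_Xs hf (ex j) p]
  have hsplit : ∀ k : Fin n,
      ((((ex j : Pt n).2.1 k : ℝ) : ℂ) * Dv (eqv k) f p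
       + ((p.2.1 k : ℝ) : ℂ) * Dv (ex j) (Dv (eqv k) f) p
       + Complex.I * ((((ex j : Pt n).1 k : ℝ) : ℂ) * ((p.2.2 k : ℝ) : ℂ)
           + ((p.1 k : ℝ) : ℂ) * (((ex j : Pt n).2.2 k : ℝ) : ℂ)) * f p
       + Complex.I * ((p.1 k : ℝ) : ℂ) * ((p.2.2 k : ℝ) : ℂ) * Dv (ex j) f p)
      = Complex.I * (((Pi.single j (1:ℝ) : Fin n → ℝ) k : ℝ) : ℂ) * (((p.2.2 k : ℝ) : ℂ) * f p)
        + (((p.2.1 k : ℝ) : ℂ) * Dv (ex j) (Dv (eqv k) f) p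
           + Complex.I * ((p.1 k : ℝ) : ℂ) * ((p.2.2 k : ℝ) : ℂ) * Dv (ex j) f p) := by
    intro k; simp only [ex_1, ex_21, ex_22, Pi.zero_apply, Complex.ofReal_zero]; ring
  rw [Finset.sum_congr rfl fun k _ => hsplit k, Finset.sum_add_distrib,
    sum_I_single_mul j (fun k => ((p.2.2 k : ℝ) : ℂ) * f p)]
  ring

theorem Dy_Xs {f : Pt n → ℂ} (hf : Sm f) (j : Fin n) (p : Pt n) :
    Dv (ey j) (Xs n f) p = Dv (eqv j) f p
      + ∑ k : Fin n, (((p.2.1 k : ℝ) : ℂ) * Dv (ey j) (Dv (eqv k) f) p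
          + Complex.I * ((p.1 k : ℝ) : ℂ) * ((p.2.2 k : ℝ) : ℂ) * Dv (ey j) f p) := by
  rw [Dv_Xs hf (ey j) p]
  have hsplit : ∀ k : Fin n,
      ((((ey j : Pt n).2.1 k : ℝ) : ℂ) * Dv (eqv k) f p
       + ((p.2.1 k : ℝ) : ℂ) * Dv (ey j) (Dv (eqv k) f) p
       + Complex.I * ((((ey j : Pt n).1 k : ℝ) : ℂ) * ((p.2.2 k : ℝ) : ℂ)
           + ((p.1 k : ℝ) : ℂ) * (((ey j : Pt n).2.2 k : ℝ) : ℂ)) * f p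
       + Complex.I * ((p.1 k : ℝ) : ℂ) * ((p.2.2 k : ℝ) : ℂ) * Dv (ey j) f p)
      = (((Pi.single j (1:ℝ) : Fin n → ℝ) k : ℝ) : ℂ) * Dv (eqv k) f p
        + (((p.2.1 k : ℝ) : ℂ) * Dv (ey j) (Dv (eqv k) f) p
           + Complex.I * ((p.1 k : ℝ) : ℂ) * ((p.2.2 k : ℝ) : ℂ) * Dv (ey j) f p) := by
    intro k; simp only [ey_1, ey_21, ey_22, Pi.zero_apply, Complex.ofReal_zero]; ring
  rw [Finset.sum_congr rfl fun k _ => hsplit k, Finset.sum_add_distrib,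
    sum_single_mul j (fun k => Dv (eqv k) f p)]

theorem Dq_Xs {f : Pt n → ℂ} (hf : Sm f) (j : Fin n) (p : Pt n) :
    Dv (eqv j) (Xs n f) p = Complex.I * ((p.1 j : ℝ) : ℂ) * f p
      + ∑ k : Fin n, (((p.2.1 k : ℝ) : ℂ) * Dv (eqv j) (Dv (eqv k) f) p
          + Complex.I * ((p.1 k : ℝ) : ℂ) * ((p.2.2 k : ℝ) : ℂ) * Dv (eqv j) f p) := by
  rw [Dv_Xs hf (eqv j) p]
  have hsplit : ∀ k : Fin n,
      ((((eqv j : Pt n).2.1 k : ℝ) : ℂ) * Dv (eqv k) f p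
       + ((p.2.1 k : ℝ) : ℂ) * Dv (eqv j) (Dv (eqv k) f) p
       + Complex.I * ((((eqv j : Pt n).1 k : ℝ) : ℂ) * ((p.2.2 k : ℝ) : ℂ)
           + ((p.1 k : ℝ) : ℂ) * (((eqv j : Pt n).2.2 k : ℝ) : ℂ)) * f p
       + Complex.I * ((p.1 k : ℝ) : ℂ) * ((p.2.2 k : ℝ) : ℂ) * Dv (eqv j) f p)
      = Complex.I * (((Pi.single j (1:ℝ) : Fin n → ℝ) k : ℝ) : ℂ) * (((p.1 k : ℝ) : ℂ) * f p)
        + (((p.2.1 k : ℝ) : ℂ) * Dv (eqv j) (Dv (eqv k) f) p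
           + Complex.I * ((p.1 k : ℝ) : ℂ) * ((p.2.2 k : ℝ) : ℂ) * Dv (eqv j) f p) := by
    intro k; simp only [eqv_1, eqv_21, eqv_22, Pi.zero_apply, Complex.ofReal_zero]; ring
  rw [Finset.sum_congr rfl fun k _ => hsplit k, Finset.sum_add_distrib,
    sum_I_single_mul j (fun k => ((p.1 k : ℝ) : ℂ) * f p)]
  ring

theorem DxDq_Xs {f : Pt n → ℂ} (hf : Sm f) (j : Fin n) (p : Pt n) :
    Dv (ex j) (Dv (eqv j) (Xs n f)) p =
      Complex.I * f p + Complex.I * ((p.1 j : ℝ) : ℂ) * Dv (ex j) f p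
      + Complex.I * ((p.2.2 j : ℝ) : ℂ) * Dv (eqv j) f p
      + ∑ k : Fin n, (((p.2.1 k : ℝ) : ℂ) * Dv (ex j) (Dv (eqv j) (Dv (eqv k) f)) p
          + Complex.I * ((p.1 k : ℝ) : ℂ) * ((p.2.2 k : ℝ) : ℂ) * Dv (ex j) (Dv (eqv j) f) p) := by
  have hfq : Dv (eqv j) (Xs n f) = fun p => Complex.I * ((p.1 j : ℝ) : ℂ) * f p
      + ∑ k : Fin n, (((p.2.1 k : ℝ) : ℂ) * Dv (eqv j) (Dv (eqv k) f) p
          + Complex.I * ((p.1 k : ℝ) : ℂ) * ((p.2.2 k : ℝ) : ℂ) * Dv (eqv j) f p) :=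
    funext fun p => Dq_Xs hf j p
  have h1 : Sm (fun p : Pt n => Complex.I * ((p.1 j : ℝ) : ℂ) * f p) :=
    (contDiff_const.mul (Sm_cx j)).mul hf
  have hterm : ∀ k : Fin n, Sm (fun p : Pt n =>
      ((p.2.1 k : ℝ) : ℂ) * Dv (eqv j) (Dv (eqv k) f) p
      + Complex.I * ((p.1 k : ℝ) : ℂ) * ((p.2.2 k : ℝ) : ℂ) * Dv (eqv j) f p) := fun k =>
    ((Sm_cy k).mul (Dv_smooth (Dv_smooth hf (eqv k)) (eqv j))).add
      (((contDiff_const.mul (Sm_cx k)).mul (Sm_cq k)).mul (Dv_smooth hf (eqv j)))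
  rw [hfq, Dv_add h1 (ContDiff.sum fun k _ => hterm k) (ex j) p,
    Dv_mul (contDiff_const.mul (Sm_cx j)) hf (ex j) p,
    Dv_const_mul (Sm_cx j) Complex.I (ex j) p, Dv_cx j (ex j) p,
    Dv_sum univ _ (fun k _ => hterm k) (ex j) p]
  have hk : ∀ k : Fin n,
      Dv (ex j) (fun p : Pt n => ((p.2.1 k : ℝ) : ℂ) * Dv (eqv j) (Dv (eqv k) f) p
        + Complex.I * ((p.1 k : ℝ) : ℂ) * ((p.2.2 k : ℝ) : ℂ) * Dv (eqv j) f p) p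
      = Complex.I * (((Pi.single j (1:ℝ) : Fin n → ℝ) k : ℝ) : ℂ)
          * (((p.2.2 k : ℝ) : ℂ) * Dv (eqv j) f p)
        + (((p.2.1 k : ℝ) : ℂ) * Dv (ex j) (Dv (eqv j) (Dv (eqv k) f)) p
           + Complex.I * ((p.1 k : ℝ) : ℂ) * ((p.2.2 k : ℝ) : ℂ) * Dv (ex j) (Dv (eqv j) f) p) := by
    intro k
    rw [Dv_add ((Sm_cy k).mul (Dv_smooth (Dv_smooth hf (eqv k)) (eqv j)))
        (((contDiff_const.mul (Sm_cx k)).mul (Sm_cq k)).mul (Dv_smooth hf (eqv j))) (ex j) p,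
      Dv_mul (Sm_cy k) (Dv_smooth (Dv_smooth hf (eqv k)) (eqv j)) (ex j) p,
      Dv_cy k (ex j) p,
      Dv_mul ((contDiff_const.mul (Sm_cx k)).mul (Sm_cq k)) (Dv_smooth hf (eqv j)) (ex j) p,
      Dv_mul (contDiff_const.mul (Sm_cx k)) (Sm_cq k) (ex j) p,
      Dv_const_mul (Sm_cx k) Complex.I (ex j) p, Dv_cx k (ex j) p, Dv_cq k (ex j) p]
    simp only [ex_1, ex_21, ex_22, Pi.zero_apply, Complex.ofReal_zero]
    ring
  rw [Finset.sum_congr rfl fun k _ => hk k, Finset.sum_add_distrib,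
    sum_I_single_mul j (fun k => ((p.2.2 k : ℝ) : ℂ) * Dv (eqv j) f p)]
  simp only [ex_1, Pi.single_eq_same, Complex.ofReal_one]
  ring

theorem rel1 {f : Pt n → ℂ} (hf : Sm f) (p : Pt n) :
    EN n (Ds n f) p - Ds n (EN n f) p = - Ds n f p := by
  have hDs : Sm (Ds n f) := Sm_Ds hf
  have hEN : Sm (EN n f) := Sm_EN hf
  have hswf : ∀ v w, Dv v (Dv w f) = Dv w (Dv v f) := fun v w => funext fun p => Dv_swap hf v w p
  have hsw3 : ∀ u v w (p : Pt n), Dv u (Dv v (Dv w f)) p = Dv v (Dv u (Dv w f)) p :=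
    fun u v w p => Dv_swap (Dv_smooth hf w) u v p
  have hDsp : Ds n f p = ∑ j : Fin n, (Complex.I * ((p.2.2 j : ℝ) : ℂ) * Dv (ey j) f p
      - Dv (ex j) (Dv (eqv j) f) p) := congrFun (Ds_eq hf) p
  -- step A
  have hA : EN n (Ds n f) p = (∑ j : Fin n, ∑ k : Fin n,
      (((p.1 j : ℝ) : ℂ) * (Complex.I * ((p.2.2 k : ℝ) : ℂ) * Dv (ex j) (Dv (ey k) f) p
          - Dv (ex j) (Dv (ex k) (Dv (eqv k) f)) p)
       + ((p.2.1 j : ℝ) : ℂ) * (Complex.I * ((p.2.2 k : ℝ) : ℂ) * Dv (ey j) (Dv (ey k) f) p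
          - Dv (ey j) (Dv (ex k) (Dv (eqv k) f)) p)))
      + (n : ℂ) * Ds n f p := by
    show Eul n (Ds n f) p + (n : ℂ) * Ds n f p = _
    congr 1
    simp only [Eul]
    refine Finset.sum_congr rfl fun j _ => ?_
    rw [pdx_eq (hDs.dAt p) j, pdy_eq (hDs.dAt p) j, Dx_Ds hf j p, Dy_Ds hf j p,
      Finset.mul_sum, Finset.mul_sum, ← Finset.sum_add_distrib]
  -- step B
  have hB : Ds n (EN n f) p = (∑ j : Fin n, ∑ k : Fin n,
      (Complex.I * ((p.2.2 j : ℝ) : ℂ)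
          * (((p.1 k : ℝ) : ℂ) * Dv (ey j) (Dv (ex k) f) p
             + ((p.2.1 k : ℝ) : ℂ) * Dv (ey j) (Dv (ey k) f) p)
       - (((p.1 k : ℝ) : ℂ) * Dv (ex j) (Dv (eqv j) (Dv (ex k) f)) p
          + ((p.2.1 k : ℝ) : ℂ) * Dv (ex j) (Dv (eqv j) (Dv (ey k) f)) p)))
      + ((1 : ℂ) + (n : ℂ)) * Ds n f p := by
    have step : Ds n (EN n f) p = ∑ j : Fin n,
        ((∑ k : Fin n, (Complex.I * ((p.2.2 j : ℝ) : ℂ)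
            * (((p.1 k : ℝ) : ℂ) * Dv (ey j) (Dv (ex k) f) p
               + ((p.2.1 k : ℝ) : ℂ) * Dv (ey j) (Dv (ey k) f) p)
          - (((p.1 k : ℝ) : ℂ) * Dv (ex j) (Dv (eqv j) (Dv (ex k) f)) p
             + ((p.2.1 k : ℝ) : ℂ) * Dv (ex j) (Dv (eqv j) (Dv (ey k) f)) p)))
         + ((1 : ℂ) + (n : ℂ)) * (Complex.I * ((p.2.2 j : ℝ) : ℂ) * Dv (ey j) f p
            - Dv (ex j) (Dv (eqv j) f) p)) := by
      simp only [Ds]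
      refine Finset.sum_congr rfl fun j _ => ?_
      have hpdq : pdq n j (EN n f) = Dv (eqv j) (EN n f) :=
        funext fun p => pdq_eq (hEN.dAt p) j
      rw [pdy_eq (hEN.dAt p) j, hpdq, pdx_eq ((Dv_smooth hEN (eqv j)).dAt p) j,
        Dy_EN hf j p, DxDq_EN hf j p]
      rw [show ∀ A a b S1 S2 : ℂ, A * (a + (n:ℂ)*a + S1) - (b + (n:ℂ)*b + S2)
          = (A*S1 - S2) + ((1:ℂ)+(n:ℂ))*(A*a - b) from fun A a b S1 S2 => by ring]
      rw [Finset.mul_sum, ← Finset.sum_sub_distrib]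
    rw [step, Finset.sum_add_distrib, ← Finset.mul_sum, ← hDsp]
  -- step C : the double sums agree
  have hC : (∑ j : Fin n, ∑ k : Fin n,
      (((p.1 j : ℝ) : ℂ) * (Complex.I * ((p.2.2 k : ℝ) : ℂ) * Dv (ex j) (Dv (ey k) f) p
          - Dv (ex j) (Dv (ex k) (Dv (eqv k) f)) p)
       + ((p.2.1 j : ℝ) : ℂ) * (Complex.I * ((p.2.2 k : ℝ) : ℂ) * Dv (ey j) (Dv (ey k) f) p
          - Dv (ey j) (Dv (ex k) (Dv (eqv k) f)) p)))
      = (∑ j : Fin n, ∑ k : Fin n,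
      (Complex.I * ((p.2.2 j : ℝ) : ℂ)
          * (((p.1 k : ℝ) : ℂ) * Dv (ey j) (Dv (ex k) f) p
             + ((p.2.1 k : ℝ) : ℂ) * Dv (ey j) (Dv (ey k) f) p)
       - (((p.1 k : ℝ) : ℂ) * Dv (ex j) (Dv (eqv j) (Dv (ex k) f)) p
          + ((p.2.1 k : ℝ) : ℂ) * Dv (ex j) (Dv (eqv j) (Dv (ey k) f)) p))) := by
    rw [Finset.sum_comm (s := Finset.univ) (t := Finset.univ)
      (f := fun j k => (Complex.I * ((p.2.2 j : ℝ) : ℂ)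
          * (((p.1 k : ℝ) : ℂ) * Dv (ey j) (Dv (ex k) f) p
             + ((p.2.1 k : ℝ) : ℂ) * Dv (ey j) (Dv (ey k) f) p)
       - (((p.1 k : ℝ) : ℂ) * Dv (ex j) (Dv (eqv j) (Dv (ex k) f)) p
          + ((p.2.1 k : ℝ) : ℂ) * Dv (ex j) (Dv (eqv j) (Dv (ey k) f)) p)))]
    refine Finset.sum_congr rfl fun j _ => Finset.sum_congr rfl fun k _ => ?_
    rw [hswf (ey k) (ex j), hswf (ey k) (ey j), hswf (eqv k) (ex j), hsw3 (ex k) (ex j) (eqv k) p,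
      hswf (eqv k) (ey j), hsw3 (ex k) (ey j) (eqv k) p]
    ring
  rw [hA, hB, hC]
  ring

theorem rel2 {f : Pt n → ℂ} (hf : Sm f) (p : Pt n) :
    EN n (Xs n f) p - Xs n (EN n f) p = Xs n f p := by
  have hXs : Sm (Xs n f) := Sm_Xs hf
  have hEN : Sm (EN n f) := Sm_EN hf
  have hswf : ∀ v w, Dv v (Dv w f) = Dv w (Dv v f) := fun v w => funext fun p => Dv_swap hf v w p
  have hXsp : Xs n f p = ∑ j : Fin n, (((p.2.1 j : ℝ) : ℂ) * Dv (eqv j) f p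
      + Complex.I * ((p.1 j : ℝ) : ℂ) * ((p.2.2 j : ℝ) : ℂ) * f p) := congrFun (Xs_eq hf) p
  have hENp : EN n f p = (∑ k : Fin n, (((p.1 k : ℝ) : ℂ) * Dv (ex k) f p
      + ((p.2.1 k : ℝ) : ℂ) * Dv (ey k) f p)) + (n : ℂ) * f p := congrFun (EN_eq hf) p
  -- step A
  have hA : EN n (Xs n f) p = (∑ j : Fin n, ∑ k : Fin n,
      (((p.1 j : ℝ) : ℂ) * (((p.2.1 k : ℝ) : ℂ) * Dv (ex j) (Dv (eqv k) f) p
          + Complex.I * ((p.1 k : ℝ) : ℂ) * ((p.2.2 k : ℝ) : ℂ) * Dv (ex j) f p)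
       + ((p.2.1 j : ℝ) : ℂ) * (((p.2.1 k : ℝ) : ℂ) * Dv (ey j) (Dv (eqv k) f) p
          + Complex.I * ((p.1 k : ℝ) : ℂ) * ((p.2.2 k : ℝ) : ℂ) * Dv (ey j) f p)))
      + Xs n f p + (n : ℂ) * Xs n f p := by
    show Eul n (Xs n f) p + (n : ℂ) * Xs n f p = _
    have step : Eul n (Xs n f) p = ∑ j : Fin n,
        ((∑ k : Fin n, (((p.1 j : ℝ) : ℂ) * (((p.2.1 k : ℝ) : ℂ) * Dv (ex j) (Dv (eqv k) f) p
            + Complex.I * ((p.1 k : ℝ) : ℂ) * ((p.2.2 k : ℝ) : ℂ) * Dv (ex j) f p)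
          + ((p.2.1 j : ℝ) : ℂ) * (((p.2.1 k : ℝ) : ℂ) * Dv (ey j) (Dv (eqv k) f) p
            + Complex.I * ((p.1 k : ℝ) : ℂ) * ((p.2.2 k : ℝ) : ℂ) * Dv (ey j) f p)))
         + (((p.2.1 j : ℝ) : ℂ) * Dv (eqv j) f p
            + Complex.I * ((p.1 j : ℝ) : ℂ) * ((p.2.2 j : ℝ) : ℂ) * f p)) := by
      simp only [Eul]
      refine Finset.sum_congr rfl fun j _ => ?_
      rw [pdx_eq (hXs.dAt p) j, pdy_eq (hXs.dAt p) j, Dx_Xs hf j p, Dy_Xs hf j p]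
      rw [show ∀ Xj Yj Qj Fp B S3 S4 : ℂ,
          Xj * (Complex.I * Qj * Fp + S3) + Yj * (B + S4)
          = (Xj * S3 + Yj * S4) + (Yj * B + Complex.I * Xj * Qj * Fp)
        from fun Xj Yj Qj Fp B S3 S4 => by ring]
      rw [Finset.mul_sum, Finset.mul_sum, ← Finset.sum_add_distrib]
    rw [step, Finset.sum_add_distrib, ← hXsp]
  -- step B
  have hB : Xs n (EN n f) p = (∑ j : Fin n, ∑ k : Fin n,
      (((p.2.1 j : ℝ) : ℂ) * (((p.1 k : ℝ) : ℂ) * Dv (eqv j) (Dv (ex k) f) p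
          + ((p.2.1 k : ℝ) : ℂ) * Dv (eqv j) (Dv (ey k) f) p)
       + Complex.I * ((p.1 j : ℝ) : ℂ) * ((p.2.2 j : ℝ) : ℂ)
          * (((p.1 k : ℝ) : ℂ) * Dv (ex k) f p + ((p.2.1 k : ℝ) : ℂ) * Dv (ey k) f p)))
      + (n : ℂ) * Xs n f p := by
    have step : Xs n (EN n f) p = ∑ j : Fin n,
        ((∑ k : Fin n, (((p.2.1 j : ℝ) : ℂ) * (((p.1 k : ℝ) : ℂ) * Dv (eqv j) (Dv (ex k) f) p
              + ((p.2.1 k : ℝ) : ℂ) * Dv (eqv j) (Dv (ey k) f) p)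
           + Complex.I * ((p.1 j : ℝ) : ℂ) * ((p.2.2 j : ℝ) : ℂ)
              * (((p.1 k : ℝ) : ℂ) * Dv (ex k) f p + ((p.2.1 k : ℝ) : ℂ) * Dv (ey k) f p)))
         + (n : ℂ) * (((p.2.1 j : ℝ) : ℂ) * Dv (eqv j) f p
            + Complex.I * ((p.1 j : ℝ) : ℂ) * ((p.2.2 j : ℝ) : ℂ) * f p)) := by
      simp only [Xs]
      refine Finset.sum_congr rfl fun j _ => ?_
      rw [pdq_eq (hEN.dAt p) j, Dq_EN hf j p, hENp]
      rw [show ∀ Yj C a S5 S6 Fp : ℂ,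
          Yj * ((n : ℂ) * a + S5) + C * (S6 + (n : ℂ) * Fp)
          = (Yj * S5 + C * S6) + (n : ℂ) * (Yj * a + C * Fp)
        from fun Yj C a S5 S6 Fp => by ring]
      rw [Finset.mul_sum, Finset.mul_sum, ← Finset.sum_add_distrib]
    rw [step, Finset.sum_add_distrib, ← Finset.mul_sum, ← hXsp]
  -- step C
  have hC : (∑ j : Fin n, ∑ k : Fin n,
      (((p.1 j : ℝ) : ℂ) * (((p.2.1 k : ℝ) : ℂ) * Dv (ex j) (Dv (eqv k) f) p
          + Complex.I * ((p.1 k : ℝ) : ℂ) * ((p.2.2 k : ℝ) : ℂ) * Dv (ex j) f p)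
       + ((p.2.1 j : ℝ) : ℂ) * (((p.2.1 k : ℝ) : ℂ) * Dv (ey j) (Dv (eqv k) f) p
          + Complex.I * ((p.1 k : ℝ) : ℂ) * ((p.2.2 k : ℝ) : ℂ) * Dv (ey j) f p)))
      = (∑ j : Fin n, ∑ k : Fin n,
      (((p.2.1 j : ℝ) : ℂ) * (((p.1 k : ℝ) : ℂ) * Dv (eqv j) (Dv (ex k) f) p
          + ((p.2.1 k : ℝ) : ℂ) * Dv (eqv j) (Dv (ey k) f) p)
       + Complex.I * ((p.1 j : ℝ) : ℂ) * ((p.2.2 j : ℝ) : ℂ)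
          * (((p.1 k : ℝ) : ℂ) * Dv (ex k) f p + ((p.2.1 k : ℝ) : ℂ) * Dv (ey k) f p))) := by
    rw [Finset.sum_comm (s := Finset.univ) (t := Finset.univ)
      (f := fun j k => (((p.2.1 j : ℝ) : ℂ) * (((p.1 k : ℝ) : ℂ) * Dv (eqv j) (Dv (ex k) f) p
          + ((p.2.1 k : ℝ) : ℂ) * Dv (eqv j) (Dv (ey k) f) p)
       + Complex.I * ((p.1 j : ℝ) : ℂ) * ((p.2.2 j : ℝ) : ℂ)
          * (((p.1 k : ℝ) : ℂ) * Dv (ex k) f p + ((p.2.1 k : ℝ) : ℂ) * Dv (ey k) f p)))]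
    refine Finset.sum_congr rfl fun j _ => Finset.sum_congr rfl fun k _ => ?_
    rw [hswf (eqv k) (ex j), hswf (eqv k) (ey j)]
    ring
  rw [hA, hB, hC]
  ring

theorem rel3 {f : Pt n → ℂ} (hf : Sm f) (p : Pt n) :
    Xs n (Ds n f) p - Ds n (Xs n f) p = Complex.I * EN n f p := by
  have hDs : Sm (Ds n f) := Sm_Ds hf
  have hXs : Sm (Xs n f) := Sm_Xs hf
  have hswf : ∀ v w, Dv v (Dv w f) = Dv w (Dv v f) := fun v w => funext fun p => Dv_swap hf v w p
  have hsw3 : ∀ u v w (p : Pt n), Dv u (Dv v (Dv w f)) p = Dv v (Dv u (Dv w f)) p :=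
    fun u v w p => Dv_swap (Dv_smooth hf w) u v p
  have hDsp : Ds n f p = ∑ k : Fin n, (Complex.I * ((p.2.2 k : ℝ) : ℂ) * Dv (ey k) f p
      - Dv (ex k) (Dv (eqv k) f) p) := congrFun (Ds_eq hf) p
  have hENp : EN n f p = (∑ k : Fin n, (((p.1 k : ℝ) : ℂ) * Dv (ex k) f p
      + ((p.2.1 k : ℝ) : ℂ) * Dv (ey k) f p)) + (n : ℂ) * f p := congrFun (EN_eq hf) p
  -- step A
  have hA : Xs n (Ds n f) p = (∑ j : Fin n, ∑ k : Fin n,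
      (((p.2.1 j : ℝ) : ℂ) * (Complex.I * ((p.2.2 k : ℝ) : ℂ) * Dv (eqv j) (Dv (ey k) f) p
          - Dv (eqv j) (Dv (ex k) (Dv (eqv k) f)) p)
       + Complex.I * ((p.1 j : ℝ) : ℂ) * ((p.2.2 j : ℝ) : ℂ)
          * (Complex.I * ((p.2.2 k : ℝ) : ℂ) * Dv (ey k) f p - Dv (ex k) (Dv (eqv k) f) p)))
      + ∑ j : Fin n, ((p.2.1 j : ℝ) : ℂ) * (Complex.I * Dv (ey j) f p) := by
    have step : Xs n (Ds n f) p = ∑ j : Fin n,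
        ((∑ k : Fin n,
          (((p.2.1 j : ℝ) : ℂ) * (Complex.I * ((p.2.2 k : ℝ) : ℂ) * Dv (eqv j) (Dv (ey k) f) p
              - Dv (eqv j) (Dv (ex k) (Dv (eqv k) f)) p)
           + Complex.I * ((p.1 j : ℝ) : ℂ) * ((p.2.2 j : ℝ) : ℂ)
              * (Complex.I * ((p.2.2 k : ℝ) : ℂ) * Dv (ey k) f p - Dv (ex k) (Dv (eqv k) f) p)))
         + ((p.2.1 j : ℝ) : ℂ) * (Complex.I * Dv (ey j) f p)) := by
      simp only [Xs]
      refine Finset.sum_congr rfl fun j _ => ?_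
      rw [pdq_eq (hDs.dAt p) j, Dq_Ds hf j p, hDsp]
      rw [show ∀ Yj a S7 C S8 : ℂ,
          Yj * (Complex.I * a + S7) + C * S8
          = (Yj * S7 + C * S8) + Yj * (Complex.I * a)
        from fun Yj a S7 C S8 => by ring]
      rw [Finset.mul_sum, Finset.mul_sum, ← Finset.sum_add_distrib]
    rw [step, Finset.sum_add_distrib]
  -- step B
  have hB : Ds n (Xs n f) p = (∑ j : Fin n, ∑ k : Fin n,
      (Complex.I * ((p.2.2 j : ℝ) : ℂ)
          * (((p.2.1 k : ℝ) : ℂ) * Dv (ey j) (Dv (eqv k) f) p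
             + Complex.I * ((p.1 k : ℝ) : ℂ) * ((p.2.2 k : ℝ) : ℂ) * Dv (ey j) f p)
       - (((p.2.1 k : ℝ) : ℂ) * Dv (ex j) (Dv (eqv j) (Dv (eqv k) f)) p
          + Complex.I * ((p.1 k : ℝ) : ℂ) * ((p.2.2 k : ℝ) : ℂ) * Dv (ex j) (Dv (eqv j) f) p)))
      + ∑ j : Fin n, (-(Complex.I * f p) - Complex.I * ((p.1 j : ℝ) : ℂ) * Dv (ex j) f p) := by
    have step : Ds n (Xs n f) p = ∑ j : Fin n,
        ((∑ k : Fin n,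
          (Complex.I * ((p.2.2 j : ℝ) : ℂ)
              * (((p.2.1 k : ℝ) : ℂ) * Dv (ey j) (Dv (eqv k) f) p
                 + Complex.I * ((p.1 k : ℝ) : ℂ) * ((p.2.2 k : ℝ) : ℂ) * Dv (ey j) f p)
           - (((p.2.1 k : ℝ) : ℂ) * Dv (ex j) (Dv (eqv j) (Dv (eqv k) f)) p
              + Complex.I * ((p.1 k : ℝ) : ℂ) * ((p.2.2 k : ℝ) : ℂ) * Dv (ex j) (Dv (eqv j) f) p)))
         + (-(Complex.I * f p) - Complex.I * ((p.1 j : ℝ) : ℂ) * Dv (ex j) f p)) := by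
      simp only [Ds]
      refine Finset.sum_congr rfl fun j _ => ?_
      have hpdq : pdq n j (Xs n f) = Dv (eqv j) (Xs n f) :=
        funext fun p => pdq_eq (hXs.dAt p) j
      rw [pdy_eq (hXs.dAt p) j, hpdq, pdx_eq ((Dv_smooth hXs (eqv j)).dAt p) j,
        Dy_Xs hf j p, DxDq_Xs hf j p]
      rw [show ∀ Qj b S4 Fp Xj Dx S9 : ℂ,
          Complex.I * Qj * (b + S4)
            - (Complex.I * Fp + Complex.I * Xj * Dx + Complex.I * Qj * b + S9)
          = (Complex.I * Qj * S4 - S9) + (-(Complex.I * Fp) - Complex.I * Xj * Dx)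
        from fun Qj b S4 Fp Xj Dx S9 => by ring]
      rw [Finset.mul_sum, ← Finset.sum_sub_distrib]
    rw [step, Finset.sum_add_distrib]
  -- step C
  have hC : (∑ j : Fin n, ∑ k : Fin n,
      (((p.2.1 j : ℝ) : ℂ) * (Complex.I * ((p.2.2 k : ℝ) : ℂ) * Dv (eqv j) (Dv (ey k) f) p
          - Dv (eqv j) (Dv (ex k) (Dv (eqv k) f)) p)
       + Complex.I * ((p.1 j : ℝ) : ℂ) * ((p.2.2 j : ℝ) : ℂ)
          * (Complex.I * ((p.2.2 k : ℝ) : ℂ) * Dv (ey k) f p - Dv (ex k) (Dv (eqv k) f) p)))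
      = (∑ j : Fin n, ∑ k : Fin n,
      (Complex.I * ((p.2.2 j : ℝ) : ℂ)
          * (((p.2.1 k : ℝ) : ℂ) * Dv (ey j) (Dv (eqv k) f) p
             + Complex.I * ((p.1 k : ℝ) : ℂ) * ((p.2.2 k : ℝ) : ℂ) * Dv (ey j) f p)
       - (((p.2.1 k : ℝ) : ℂ) * Dv (ex j) (Dv (eqv j) (Dv (eqv k) f)) p
          + Complex.I * ((p.1 k : ℝ) : ℂ) * ((p.2.2 k : ℝ) : ℂ) * Dv (ex j) (Dv (eqv j) f) p))) := by
    rw [Finset.sum_comm (s := Finset.univ) (t := Finset.univ)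
      (f := fun j k => (Complex.I * ((p.2.2 j : ℝ) : ℂ)
          * (((p.2.1 k : ℝ) : ℂ) * Dv (ey j) (Dv (eqv k) f) p
             + Complex.I * ((p.1 k : ℝ) : ℂ) * ((p.2.2 k : ℝ) : ℂ) * Dv (ey j) f p)
       - (((p.2.1 k : ℝ) : ℂ) * Dv (ex j) (Dv (eqv j) (Dv (eqv k) f)) p
          + Complex.I * ((p.1 k : ℝ) : ℂ) * ((p.2.2 k : ℝ) : ℂ) * Dv (ex j) (Dv (eqv j) f) p)))]
    refine Finset.sum_congr rfl fun j _ => Finset.sum_congr rfl fun k _ => ?_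
    rw [hswf (ey k) (eqv j), hswf (eqv k) (eqv j), hsw3 (ex k) (eqv j) (eqv k) p]
    ring
  have hn : (∑ _j : Fin n, Complex.I * f p) = (n : ℂ) * (Complex.I * f p) := by
    rw [Finset.sum_const, Finset.card_univ, Fintype.card_fin, nsmul_eq_mul]
  rw [hA, hB, hC]
  calc (∑ j : Fin n, ∑ k : Fin n,
      (Complex.I * ((p.2.2 j : ℝ) : ℂ)
          * (((p.2.1 k : ℝ) : ℂ) * Dv (ey j) (Dv (eqv k) f) p
             + Complex.I * ((p.1 k : ℝ) : ℂ) * ((p.2.2 k : ℝ) : ℂ) * Dv (ey j) f p)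
       - (((p.2.1 k : ℝ) : ℂ) * Dv (ex j) (Dv (eqv j) (Dv (eqv k) f)) p
          + Complex.I * ((p.1 k : ℝ) : ℂ) * ((p.2.2 k : ℝ) : ℂ) * Dv (ex j) (Dv (eqv j) f) p)))
      + (∑ j : Fin n, ((p.2.1 j : ℝ) : ℂ) * (Complex.I * Dv (ey j) f p))
      - ((∑ j : Fin n, ∑ k : Fin n,
      (Complex.I * ((p.2.2 j : ℝ) : ℂ)
          * (((p.2.1 k : ℝ) : ℂ) * Dv (ey j) (Dv (eqv k) f) p
             + Complex.I * ((p.1 k : ℝ) : ℂ) * ((p.2.2 k : ℝ) : ℂ) * Dv (ey j) f p)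
       - (((p.2.1 k : ℝ) : ℂ) * Dv (ex j) (Dv (eqv j) (Dv (eqv k) f)) p
          + Complex.I * ((p.1 k : ℝ) : ℂ) * ((p.2.2 k : ℝ) : ℂ) * Dv (ex j) (Dv (eqv j) f) p)))
      + ∑ j : Fin n, (-(Complex.I * f p) - Complex.I * ((p.1 j : ℝ) : ℂ) * Dv (ex j) f p))
      = (∑ j : Fin n, (Complex.I * (((p.1 j : ℝ) : ℂ) * Dv (ex j) f p
          + ((p.2.1 j : ℝ) : ℂ) * Dv (ey j) f p))) + ∑ _j : Fin n, Complex.I * f p := by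
        rw [show ∀ D S1 S2 : ℂ, (D + S1) - (D + S2) = S1 - S2 from fun _ _ _ => by ring,
          ← Finset.sum_sub_distrib, ← Finset.sum_add_distrib]
        refine Finset.sum_congr rfl fun j _ => ?_
        ring
    _ = Complex.I * EN n f p := by
        rw [hENp, mul_add, Finset.mul_sum, hn]
        ring


/-- The operators `X_s`, `D_s` and `E + n` satisfy the `sl(2)` commutation relations:
`[E+n, D_s] = −D_s`, `[E+n, X_s] = X_s` and `[X_s, D_s] = i (E+n)`. -/
theorem sl2_relations (n : ℕ) (hn : 1 ≤ n) (f : Pt n → ℂ) (hf : ContDiff ℝ (⊤ : ℕ∞) f) :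
    (∀ p, EN n (Ds n f) p - Ds n (EN n f) p = - Ds n f p) ∧
    (∀ p, EN n (Xs n f) p - Xs n (EN n f) p = Xs n f p) ∧
    (∀ p, Xs n (Ds n f) p - Ds n (Xs n f) p = Complex.I * EN n f p) := by
  have hf' : Sm f := hf.of_le (by simp)
  exact ⟨fun p => rel1 hf' p, fun p => rel2 hf' p, fun p => rel3 hf' p⟩
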